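/- Let 0 < s < 1/2, let g : (0,∞) → [0,∞) be nonincreasing, and suppose there exist C > 0 and x₀ > 0 such that (g(2x/3) - g(4x/3))·x^{1-2s} ≤ C for all 0 < x ≤ x₀. Then there exists C' > 0 such that g(z) ≤ C'·z^{-(1-2s)} for all 0 < z ≤ 2x₀/3. -/

import Mathlib

/-!
Write `α = 1 - 2s` and `y = 2x/3`; the hypothesis says that `g` grows by at most `K y^{-α}` when its
argument is halved from `2y` to `y`. Along the dyadic sequence `y₀ 2^{-n}` these increments form a
geometric series with ratio `2^α > 1`, so the sum is dominated by its last term and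
`g (y₀ 2^{-n}) ≤ g y₀ + K 2^α/(2^α - 1) (y₀ 2^{-n})^{-α}`. Monotonicity of `g` fills in the points
between consecutive dyadic scales.
-/

open Real Set

lemma rpow_neg_div_two {y : ℝ} (hy : 0 ≤ y) (α : ℝ) : (y / 2) ^ (-α) = 2 ^ α * y ^ (-α) := by
  rw [div_rpow hy zero_le_two, rpow_neg zero_le_two α, div_inv_eq_mul, mul_comm]

section DyadicStep

variable {g : ℝ → ℝ} {α K y₀ : ℝ}

lemma le_add_of_dyadic_step (hα : 0 < α) (hK : 0 ≤ K) (hy₀ : 0 < y₀)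
    (hstep : ∀ y, 0 < y → y ≤ y₀ → g y - g (2 * y) ≤ K * y ^ (-α)) (n : ℕ) :
    g (y₀ / 2 ^ n) ≤ g y₀ + K * (2 ^ α / (2 ^ α - 1)) * (y₀ / 2 ^ n) ^ (-α) := by
  have hr : 1 < (2 : ℝ) ^ α := one_lt_rpow one_lt_two hα
  have hD : 0 ≤ (2 : ℝ) ^ α / (2 ^ α - 1) := div_nonneg (by linarith) (by linarith)
  induction n with
  | zero =>
    simp only [pow_zero, div_one, le_add_iff_nonneg_right]
    positivity
  | succ n ih =>
    set x := y₀ / 2 ^ n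
    have hx : 0 < x := by positivity
    have hxy₀ : x ≤ y₀ := div_le_self hy₀.le (one_le_pow₀ one_le_two)
    have hhalf := hstep (x / 2) (by positivity) ((half_le_self hx.le).trans hxy₀)
    rw [mul_div_cancel₀ x two_ne_zero, rpow_neg_div_two hx.le] at hhalf
    have hgeom : (2 : ℝ) ^ α / (2 ^ α - 1) + 2 ^ α = 2 ^ α / (2 ^ α - 1) * 2 ^ α := by
      field_simp [(by linarith : (2 : ℝ) ^ α - 1 ≠ 0)]
      ring
    rw [pow_succ, ← div_div, rpow_neg_div_two hx.le]
    linear_combination ih + hhalf + K * x ^ (-α) * hgeom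

lemma le_add_rpow_neg_of_dyadic_step (hα : 0 < α) (hK : 0 ≤ K) (hy₀ : 0 < y₀)
    (hmono : AntitoneOn g (Ioi 0))
    (hstep : ∀ y, 0 < y → y ≤ y₀ → g y - g (2 * y) ≤ K * y ^ (-α)) {z : ℝ} (hz : 0 < z)
    (hzy₀ : z ≤ y₀) :
    g z ≤ g y₀ + K * (2 ^ α / (2 ^ α - 1)) * 2 ^ α * z ^ (-α) := by
  have hD : 0 ≤ (2 : ℝ) ^ α / (2 ^ α - 1) :=
    div_nonneg (by positivity) (by linarith [one_lt_rpow one_lt_two hα])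
  obtain ⟨n, hn, hn'⟩ := exists_nat_pow_near ((one_le_div hz).2 hzy₀) one_lt_two
  have hlt : y₀ / 2 ^ (n + 1) < z := by
    rw [div_lt_iff₀ (by positivity)]
    rwa [div_lt_iff₀ hz, mul_comm] at hn'
  have hle : z / 2 ≤ y₀ / 2 ^ (n + 1) := by
    rw [le_div_iff₀ hz, mul_comm, ← le_div_iff₀ (by positivity)] at hn
    rw [pow_succ, ← div_div]
    gcongr
  calc g z ≤ g (y₀ / 2 ^ (n + 1)) := hmono (mem_Ioi.2 (by positivity)) hz hlt.le
    _ ≤ g y₀ + K * (2 ^ α / (2 ^ α - 1)) * (y₀ / 2 ^ (n + 1)) ^ (-α) :=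
      le_add_of_dyadic_step hα hK hy₀ hstep (n + 1)
    _ ≤ g y₀ + K * (2 ^ α / (2 ^ α - 1)) * (z / 2) ^ (-α) := by
      have hpow := rpow_le_rpow_of_nonpos (by positivity) hle (neg_nonpos.2 hα.le)
      gcongr
    _ = g y₀ + K * (2 ^ α / (2 ^ α - 1)) * 2 ^ α * z ^ (-α) := by
      rw [rpow_neg_div_two hz.le]
      ring

theorem exists_le_mul_rpow_neg_of_dyadic_step (hα : 0 < α) (hK : 0 < K) (hy₀ : 0 < y₀)
    (hgy₀ : 0 ≤ g y₀) (hmono : AntitoneOn g (Ioi 0))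
    (hstep : ∀ y, 0 < y → y ≤ y₀ → g y - g (2 * y) ≤ K * y ^ (-α)) :
    ∃ C' : ℝ, 0 < C' ∧ ∀ z : ℝ, 0 < z → z ≤ y₀ → g z ≤ C' * z ^ (-α) := by
  have hD : 0 < (2 : ℝ) ^ α / (2 ^ α - 1) :=
    div_pos (by positivity) (by linarith [one_lt_rpow one_lt_two hα])
  refine ⟨g y₀ * y₀ ^ α + K * (2 ^ α / (2 ^ α - 1)) * 2 ^ α, by positivity, fun z hz hzy₀ => ?_⟩
  have hscale : 1 ≤ y₀ ^ α * z ^ (-α) := by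
    rw [rpow_neg hz.le, ← div_eq_mul_inv, ← div_rpow hy₀.le hz.le]
    exact one_le_rpow ((one_le_div hz).2 hzy₀) hα.le
  calc g z ≤ g y₀ + K * (2 ^ α / (2 ^ α - 1)) * 2 ^ α * z ^ (-α) :=
        le_add_rpow_neg_of_dyadic_step hα hK.le hy₀ hmono hstep hz hzy₀
    _ ≤ g y₀ * (y₀ ^ α * z ^ (-α)) + K * (2 ^ α / (2 ^ α - 1)) * 2 ^ α * z ^ (-α) := by
      gcongr
      exact le_mul_of_one_le_right hgy₀ hscale
    _ = _ := by ring

end DyadicStep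

theorem dyadic_singularity_estimate_general (s : ℝ) (hs1 : s < 1 / 2)
    (g : ℝ → ℝ) (hgpos : ∀ x, 0 < x → 0 ≤ g x)
    (hgmono : AntitoneOn g (Set.Ioi 0))
    (C x₀ : ℝ) (hC : 0 < C) (hx₀ : 0 < x₀)
    (hkey : ∀ x : ℝ, 0 < x → x ≤ x₀ → (g (2 * x / 3) - g (4 * x / 3)) * x ^ (1 - 2 * s) ≤ C) :
    ∃ C' : ℝ, 0 < C' ∧ ∀ z : ℝ, 0 < z → z ≤ 2 * x₀ / 3 → g z ≤ C' * z ^ (-(1 - 2 * s)) := by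
  have hstep : ∀ y, 0 < y → y ≤ 2 * x₀ / 3 →
      g y - g (2 * y) ≤ C * (3 / 2) ^ (-(1 - 2 * s)) * y ^ (-(1 - 2 * s)) := by
    intro y hy hyx₀
    have h := hkey (3 / 2 * y) (by positivity) (by linarith)
    rw [show 2 * (3 / 2 * y) / 3 = y by ring, show 4 * (3 / 2 * y) / 3 = 2 * y by ring] at h
    rw [mul_assoc, ← mul_rpow (by norm_num) hy.le, rpow_neg (by positivity), ← div_eq_mul_inv,
      le_div_iff₀ (by positivity)]
    exact h
  exact exists_le_mul_rpow_neg_of_dyadic_step (by linarith) (by positivity) (by positivity)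
    (hgpos _ (by positivity)) hgmono hstep

theorem dyadic_singularity_estimate (s : ℝ) (hs0 : 0 < s) (hs1 : s < 1 / 2)
    (g : ℝ → ℝ) (hgpos : ∀ x, 0 < x → 0 ≤ g x)
    (hgmono : AntitoneOn g (Set.Ioi 0))
    (C x₀ : ℝ) (hC : 0 < C) (hx₀ : 0 < x₀)
    (hkey : ∀ x : ℝ, 0 < x → x ≤ x₀ → (g (2 * x / 3) - g (4 * x / 3)) * x ^ (1 - 2 * s) ≤ C) :
    ∃ C' : ℝ, 0 < C' ∧ ∀ z : ℝ, 0 < z → z ≤ 2 * x₀ / 3 → g z ≤ C' * z ^ (-(1 - 2 * s)) :=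
  dyadic_singularity_estimate_general s hs1 g hgpos hgmono C x₀ hC hx₀ hkey
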